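/- Under the affine structural decomposition, the conditional variance of the futures price equals Var[F_t(τ_1,τ_2) | Y_t = y] = (1/(τ_2−τ_1))² ∬_{[τ_1,τ_2]²} (w_t^X(u,s) − 1) · g(A_t^u y + B_t^u) g(A_t^s y + B_t^s) du ds. -/

import Mathlib

open MeasureTheory ProbabilityTheory

/-!
The futures price is a parametric integral `(τ₂ - τ₁)⁻¹ ∫ u, h u ω du` of the process
`h u = X_t^u g(A_t^u y + B_t^u)`. Expanding the square of a parametric integral as a double
integral and exchanging it with the expectation (Fubini) shows that its variance is the double
integral of the covariances `E[h u h s] - E[h u] E[h s]`; here that covariance is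
`(w_t^X(u,s) - 1) g(A_t^u y + B_t^u) g(A_t^s y + B_t^s)` because `E[X_t^u] = 1`.
-/

section ParametricIntegral

variable {ι Ω : Type*} [MeasurableSpace ι] {m0 : MeasurableSpace Ω}
  {ν : Measure ι} {μ : Measure Ω} [SFinite ν] [SFinite μ] {h : ι → Ω → ℝ}

lemma integral_integral_sq_eq_integral_prod
    (hh₂ : Integrable (fun p : (ι × ι) × Ω => h p.1.1 p.2 * h p.1.2 p.2) ((ν.prod ν).prod μ)) :
    ∫ ω, (∫ u, h u ω ∂ν) ^ 2 ∂μ = ∫ p : ι × ι, ∫ ω, h p.1 ω * h p.2 ω ∂μ ∂(ν.prod ν) := by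
  simp_rw [sq, ← integral_prod_mul]
  exact (integral_integral_swap (f := fun (p : ι × ι) ω => h p.1 ω * h p.2 ω) hh₂).symm

lemma memLp_two_integral (hh₁ : Integrable (Function.uncurry h) (ν.prod μ))
    (hh₂ : Integrable (fun p : (ι × ι) × Ω => h p.1.1 p.2 * h p.1.2 p.2) ((ν.prod ν).prod μ)) :
    MemLp (fun ω => ∫ u, h u ω ∂ν) 2 μ := by
  have hsq : Integrable (fun ω => (∫ u, h u ω ∂ν) ^ 2) μ := by
    simp_rw [sq, ← integral_prod_mul]
    exact hh₂.integral_prod_right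
  exact (memLp_two_iff_integrable_sq hh₁.integral_prod_right.aestronglyMeasurable).2 hsq

theorem variance_integral_eq_integral_integral [IsProbabilityMeasure μ]
    (hh₁ : Integrable (Function.uncurry h) (ν.prod μ))
    (hh₂ : Integrable (fun p : (ι × ι) × Ω => h p.1.1 p.2 * h p.1.2 p.2) ((ν.prod ν).prod μ)) :
    variance (fun ω => ∫ u, h u ω ∂ν) μ =
      ∫ u, ∫ s, (∫ ω, h u ω * h s ω ∂μ - (∫ ω, h u ω ∂μ) * ∫ ω, h s ω ∂μ) ∂ν ∂ν := by
  have hmean : ∫ ω, ∫ u, h u ω ∂ν ∂μ = ∫ u, ∫ ω, h u ω ∂μ ∂ν :=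
    (integral_integral_swap hh₁).symm
  have hmoment : Integrable (fun p : ι × ι => ∫ ω, h p.1 ω * h p.2 ω ∂μ) (ν.prod ν) :=
    hh₂.integral_prod_left
  have hproduct : Integrable (fun p : ι × ι => (∫ ω, h p.1 ω ∂μ) * ∫ ω, h p.2 ω ∂μ) (ν.prod ν) :=
    hh₁.integral_prod_left.mul_prod hh₁.integral_prod_left
  rw [variance_eq_sub (memLp_two_integral hh₁ hh₂),
    integral_integral (f := fun u s => ∫ ω, h u ω * h s ω ∂μ - (∫ ω, h u ω ∂μ) * ∫ ω, h s ω ∂μ)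
      (hmoment.sub hproduct),
    integral_sub hmoment hproduct,
    integral_prod_mul (fun u => ∫ ω, h u ω ∂μ) (fun u => ∫ ω, h u ω ∂μ)]
  simp only [Pi.pow_apply]
  rw [integral_integral_sq_eq_integral_prod hh₂, hmean, sq]

end ParametricIntegral

theorem futures_price_conditional_variance_general
    {Ω : Type*} {m0 : MeasurableSpace Ω} (μ : Measure Ω) [IsProbabilityMeasure μ]
    {n : ℕ} {m : ℕ} (t τ₁ τ₂ : ℝ) (hτ : τ₁ < τ₂)
    (σv : ℝ → ℝ → EuclideanSpace ℝ (Fin m))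
    (X : ℝ → Ω → ℝ)
    (hXmean : ∀ u : ℝ, ∫ ω, X u ω ∂μ = 1)
    (hXcross : ∀ u s : ℝ, ∫ ω, X u ω * X s ω ∂μ =
      Real.exp ((1 / 2) * ∫ v in (0:ℝ)..t,
        ((inner ℝ (σv u v) (σv s v) : ℝ) + (inner ℝ (σv s v) (σv u v) : ℝ))))
    (g : (Fin n → ℝ) → ℝ)
    (A : ℝ → Matrix (Fin n) (Fin n) ℝ) (B : ℝ → Fin n → ℝ) (y : Fin n → ℝ)
    (hint1 : Integrable (Function.uncurry fun u ω => X u ω * g ((A u).mulVec y + B u))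
      ((volume.restrict (Set.Icc τ₁ τ₂)).prod μ))
    (hint2 : Integrable
      (fun p : (ℝ × ℝ) × Ω => X p.1.1 p.2 * g ((A p.1.1).mulVec y + B p.1.1) *
        (X p.1.2 p.2 * g ((A p.1.2).mulVec y + B p.1.2)))
      (((volume.restrict (Set.Icc τ₁ τ₂)).prod (volume.restrict (Set.Icc τ₁ τ₂))).prod μ)) :
    variance (fun ω => (τ₂ - τ₁)⁻¹ * ∫ u in τ₁..τ₂, X u ω * g ((A u).mulVec y + B u)) μ =
      ((τ₂ - τ₁)⁻¹) ^ 2 * ∫ u in τ₁..τ₂, ∫ s in τ₁..τ₂,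
        (Real.exp ((1 / 2) * ∫ v in (0:ℝ)..t,
            ((inner ℝ (σv u v) (σv s v) : ℝ) + (inner ℝ (σv s v) (σv u v) : ℝ))) - 1) *
        (g ((A u).mulVec y + B u) * g ((A s).mulVec y + B s)) := by
  have hIcc (F : ℝ → ℝ) : ∫ u in τ₁..τ₂, F u = ∫ u in Set.Icc τ₁ τ₂, F u := by
    rw [intervalIntegral.integral_of_le hτ.le, integral_Icc_eq_integral_Ioc]
  simp_rw [hIcc]
  rw [variance_const_mul, variance_integral_eq_integral_integral hint1 hint2]
  congr 1
  refine integral_congr_ae (.of_forall fun u => integral_congr_ae (.of_forall fun s => ?_))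
  simp only [mul_mul_mul_comm (X u _), integral_mul_const, hXcross, hXmean]
  ring

/-- Under the affine structural decomposition, the conditional variance
of the futures price F_t(τ₁,τ₂) = (τ₂−τ₁)⁻¹ ∫_{τ₁}^{τ₂} X_t^u g(A_t^u y + B_t^u) du
(conditioning on Y_t = y replaces Y_t by y, by independence of X and Y) equals
(τ₂−τ₁)⁻² ∬ (w_t^X(u,s) − 1) g(A_t^u y + B_t^u) g(A_t^s y + B_t^s) du ds, with
w_t^X(u,s) = E[X_t^u X_t^s] = exp((1/2)∫₀ᵗ (Σ(v,u)ᵀΣ(v,s) + Σ(v,s)ᵀΣ(v,u)) dv). -/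
theorem futures_price_conditional_variance
    {Ω : Type*} {m0 : MeasurableSpace Ω} (μ : Measure Ω) [IsProbabilityMeasure μ]
    {n : ℕ} {m : ℕ} (t τ₁ τ₂ : ℝ) (ht : 0 ≤ t) (htτ : t ≤ τ₁) (hτ : τ₁ < τ₂)
    (σv : ℝ → ℝ → EuclideanSpace ℝ (Fin m))
    (X : ℝ → Ω → ℝ)
    (hXmean : ∀ u : ℝ, ∫ ω, X u ω ∂μ = 1)
    (hXcross : ∀ u s : ℝ, ∫ ω, X u ω * X s ω ∂μ =
      Real.exp ((1 / 2) * ∫ v in (0:ℝ)..t,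
        ((inner ℝ (σv u v) (σv s v) : ℝ) + (inner ℝ (σv s v) (σv u v) : ℝ))))
    (g : (Fin n → ℝ) → ℝ)
    (A : ℝ → Matrix (Fin n) (Fin n) ℝ) (B : ℝ → Fin n → ℝ) (y : Fin n → ℝ)
    (hint1 : Integrable (Function.uncurry fun u ω => X u ω * g ((A u).mulVec y + B u))
      ((volume.restrict (Set.Icc τ₁ τ₂)).prod μ))
    (hint2 : Integrable
      (fun p : (ℝ × ℝ) × Ω => X p.1.1 p.2 * g ((A p.1.1).mulVec y + B p.1.1) *
        (X p.1.2 p.2 * g ((A p.1.2).mulVec y + B p.1.2)))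
      (((volume.restrict (Set.Icc τ₁ τ₂)).prod (volume.restrict (Set.Icc τ₁ τ₂))).prod μ)) :
    variance (fun ω => (τ₂ - τ₁)⁻¹ * ∫ u in τ₁..τ₂, X u ω * g ((A u).mulVec y + B u)) μ =
      ((τ₂ - τ₁)⁻¹) ^ 2 * ∫ u in τ₁..τ₂, ∫ s in τ₁..τ₂,
        (Real.exp ((1 / 2) * ∫ v in (0:ℝ)..t,
            ((inner ℝ (σv u v) (σv s v) : ℝ) + (inner ℝ (σv s v) (σv u v) : ℝ))) - 1) *
        (g ((A u).mulVec y + B u) * g ((A s).mulVec y + B s)) :=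
  futures_price_conditional_variance_general (m0 := m0) μ t τ₁ τ₂ hτ σv X hXmean hXcross g A B y
    hint1 hint2
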